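/- Let n ≥ 1, let U be an invertible n × n matrix over 𝔽₂ = ZMod 2 with F := U⁻¹ and F(i) := {k : F_{i,k} = 1}, and let m_U be the 2^n × 2^n permutation matrix with m_U e_f = e_{U f} for f ∈ 𝔽₂ⁿ. Let a_i := Z^{⊗i} ⊗ σ⁻ ⊗ I^{⊗(n−1−i)} be the n-qubit Jordan–Wigner annihilation operators. Then for every i ∈ {0,…,n−1}, the conjugated number operator satisfies m_U · (a_i)† a_i · m_U† = ½(I − Z_{F(i)}). -/

import Mathlib

open Matrix Finset
open scoped symmDiff

namespace FQ

/-- Pauli X. -/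
noncomputable def X : Matrix (ZMod 2) (ZMod 2) ℂ := !![0, 1; 1, 0]

/-- Pauli Y. -/
noncomputable def Y : Matrix (ZMod 2) (ZMod 2) ℂ := !![0, -Complex.I; Complex.I, 0]

/-- Pauli Z. -/
noncomputable def Z : Matrix (ZMod 2) (ZMod 2) ℂ := !![1, 0; 0, -1]

/-- Tensor product `M 0 ⊗ M 1 ⊗ ⋯ ⊗ M (n-1)` of a family of single-qubit operators, as a
`2^n × 2^n` matrix indexed by functions `Fin n → ZMod 2`
(the identification of `(ℂ²)^⊗n` with `ℂ^(2^n)`). -/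
noncomputable def tens {n : ℕ} (M : Fin n → Matrix (ZMod 2) (ZMod 2) ℂ) :
    Matrix (Fin n → ZMod 2) (Fin n → ZMod 2) ℂ :=
  Matrix.of fun f g => ∏ i, M i (f i) (g i)

/-- The lowering operator `σ⁻ = (X + iY)/2`. -/
noncomputable def σm : Matrix (ZMod 2) (ZMod 2) ℂ := !![0, 1; 0, 0]

/-- The `n`-qubit Jordan–Wigner annihilation operators: `ann n i = Z^⊗i ⊗ σ⁻ ⊗ I^⊗(n-1-i)`. -/
noncomputable def ann (n i : ℕ) : Matrix (Fin n → ZMod 2) (Fin n → ZMod 2) ℂ :=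
  tens fun j => if (j : ℕ) < i then Z else if (j : ℕ) = i then σm else 1

/-- The Pauli string `X_S`: Pauli `X` on each tensor factor in `S`, identity elsewhere. -/
noncomputable def Xstr {n : ℕ} (S : Finset (Fin n)) :
    Matrix (Fin n → ZMod 2) (Fin n → ZMod 2) ℂ :=
  tens fun j => if j ∈ S then X else 1

/-- The Pauli string `Y_S`: Pauli `Y` on each tensor factor in `S`, identity elsewhere. -/
noncomputable def Ystr {n : ℕ} (S : Finset (Fin n)) :
    Matrix (Fin n → ZMod 2) (Fin n → ZMod 2) ℂ :=
  tens fun j => if j ∈ S then Y else 1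

/-- The Pauli string `Z_S`: Pauli `Z` on each tensor factor in `S`, identity elsewhere. -/
noncomputable def Zstr {n : ℕ} (S : Finset (Fin n)) :
    Matrix (Fin n → ZMod 2) (Fin n → ZMod 2) ℂ :=
  tens fun j => if j ∈ S then Z else 1

/-- The `2^n × 2^n` permutation matrix `m_U` of the linear encoding determined by
`U ∈ GL_n(𝔽₂)`, sending the basis vector `e_f` to `e_{U f}`. -/
noncomputable def encMat {n : ℕ} (U : Matrix (Fin n) (Fin n) (ZMod 2)) :
    Matrix (Fin n → ZMod 2) (Fin n → ZMod 2) ℂ :=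
  Matrix.of fun g f => if g = U.mulVec f then 1 else 0

/-- `U(i) = {k : U_{k,i} = 1}`, the set of row indices of nonzero elements of the `i`-th
column of `U`. -/
def colSet {n : ℕ} (U : Matrix (Fin n) (Fin n) (ZMod 2)) (i : Fin n) : Finset (Fin n) :=
  Finset.univ.filter fun k => U k i = 1

/-- `F(i) = {k : F_{i,k} = 1}`, the set of column indices of nonzero elements of the `i`-th
row of `F`. -/
def rowSet {n : ℕ} (F : Matrix (Fin n) (Fin n) (ZMod 2)) (i : Fin n) : Finset (Fin n) :=
  Finset.univ.filter fun k => F i k = 1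

/-- `rowSet` with a natural-number index (junk value `∅` out of range). -/
def rowSetN {n : ℕ} (F : Matrix (Fin n) (Fin n) (ZMod 2)) (i : ℕ) : Finset (Fin n) :=
  if h : i < n then rowSet F ⟨i, h⟩ else ∅

/-- `P(i) = F(0) △ F(1) △ ⋯ △ F(i−1)`, the iterated symmetric difference of the rows of `F`. -/
def Pset {n : ℕ} (F : Matrix (Fin n) (Fin n) (ZMod 2)) : ℕ → Finset (Fin n)
  | 0 => ∅
  | i + 1 => Pset F i ∆ rowSetN F i

/-- `R(i) = P(i) △ F(i)`. -/
def Rset {n : ℕ} (F : Matrix (Fin n) (Fin n) (ZMod 2)) (i : ℕ) : Finset (Fin n) :=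
  Pset F i ∆ rowSetN F i

/-!
All operators involved are diagonal in the computational basis: `a_i† a_i` acts on `e_f` by
`f i = (1 - (-1) ^ f i) / 2` and `Z_S` by `(-1) ^ (∑ k ∈ S, f k)`. Conjugation by the permutation
matrix `m_U` relabels the basis through `g ↦ U⁻¹ g`, and over `𝔽₂` the `i`-th coordinate of
`U⁻¹ g` is `∑ k ∈ F(i), g k`.
-/

section PermMatrix

variable {m R : Type*} [Fintype m] [DecidableEq m]

theorem permMatrix_mul_mul_conjTranspose_permMatrix [NonAssocSemiring R] [StarRing R]
    (σ : Equiv.Perm m) (A : Matrix m m R) :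
    σ.permMatrix R * A * (σ.permMatrix R)ᴴ = A.submatrix σ σ := by
  rw [conjTranspose_permMatrix, Equiv.Perm.permMatrix, Equiv.Perm.permMatrix,
    PEquiv.toMatrix_toPEquiv_mul, PEquiv.mul_toMatrix_toPEquiv]
  rfl

@[simps]
noncomputable def mulVecPerm [CommRing R] (U : Matrix m m R) (hU : IsUnit U) :
    Equiv.Perm (m → R) where
  toFun v := U *ᵥ v
  invFun v := U⁻¹ *ᵥ v
  left_inv v := by
    dsimp only
    rw [mulVec_mulVec, nonsing_inv_mul U ((isUnit_iff_isUnit_det U).mp hU), one_mulVec]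
  right_inv v := by
    dsimp only
    rw [mulVec_mulVec, mul_nonsing_inv U ((isUnit_iff_isUnit_det U).mp hU), one_mulVec]

end PermMatrix

theorem encMat_eq_permMatrix {n : ℕ} (U : Matrix (Fin n) (Fin n) (ZMod 2)) (hU : IsUnit U) :
    encMat U = (mulVecPerm U hU)⁻¹.permMatrix ℂ := by
  ext g f
  simp only [encMat, of_apply, PEquiv.toMatrix_apply, Equiv.toPEquiv_apply, Option.mem_def,
    Option.some.injEq, Equiv.Perm.inv_eq_iff_eq]
  rfl

theorem tens_mul {n : ℕ} (M N : Fin n → Matrix (ZMod 2) (ZMod 2) ℂ) :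
    tens M * tens N = tens fun i => M i * N i := by
  ext f g
  simp only [tens, mul_apply, of_apply, ← Finset.prod_mul_distrib]
  exact (Fintype.prod_sum fun i x => M i (f i) x * N i x (g i)).symm

theorem tens_conjTranspose {n : ℕ} (M : Fin n → Matrix (ZMod 2) (ZMod 2) ℂ) :
    (tens M)ᴴ = tens fun i => (M i)ᴴ := by
  ext f g
  simp [tens, conjTranspose_apply, star_prod]

theorem tens_diagonal {n : ℕ} (d : Fin n → ZMod 2 → ℂ) :
    tens (fun j => diagonal (d j)) = diagonal fun f => ∏ j, d j (f j) := by
  ext f g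
  simp only [tens, of_apply, diagonal_apply, Fintype.prod_ite_zero, funext_iff]
  congr

theorem zmodTwo_eq_zero_or_one (a : ZMod 2) : a = 0 ∨ a = 1 := by
  revert a
  decide

def zmodTwoSign (a : ZMod 2) : ℂ := if a = 0 then 1 else -1

theorem zmodTwoSign_add (a b : ZMod 2) :
    zmodTwoSign (a + b) = zmodTwoSign a * zmodTwoSign b := by
  rcases zmodTwo_eq_zero_or_one a with rfl | rfl <;>
    rcases zmodTwo_eq_zero_or_one b with rfl | rfl <;>
    simp [zmodTwoSign, show (1 : ZMod 2) + 1 = 0 from rfl]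

theorem zmodTwoSign_sum {ι : Type*} (s : Finset ι) (g : ι → ZMod 2) :
    zmodTwoSign (∑ j ∈ s, g j) = ∏ j ∈ s, zmodTwoSign (g j) := by
  classical
  induction s using Finset.induction_on with
  | empty => simp [zmodTwoSign]
  | insert a s ha ih => rw [Finset.sum_insert ha, Finset.prod_insert ha, zmodTwoSign_add, ih]

theorem Z_eq_diagonal : Z = diagonal zmodTwoSign := by
  ext a b
  rcases zmodTwo_eq_zero_or_one a with rfl | rfl <;>
    rcases zmodTwo_eq_zero_or_one b with rfl | rfl <;> rfl

theorem σm_eq_single : σm = single 0 1 1 := by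
  ext a b
  rcases zmodTwo_eq_zero_or_one a with rfl | rfl <;>
    rcases zmodTwo_eq_zero_or_one b with rfl | rfl <;> rfl

theorem Z_conjTranspose_mul_self : Zᴴ * Z = 1 := by
  rw [Z_eq_diagonal, diagonal_conjTranspose, diagonal_mul_diagonal, ← diagonal_one]
  congr 1
  funext a
  rcases zmodTwo_eq_zero_or_one a with rfl | rfl <;> norm_num [zmodTwoSign]

theorem σm_conjTranspose_mul_self : σmᴴ * σm = diagonal fun a => (1 - zmodTwoSign a) / 2 := by
  rw [σm_eq_single, conjTranspose_single, single_mul_single_same]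
  ext a b
  rcases zmodTwo_eq_zero_or_one a with rfl | rfl <;>
    rcases zmodTwo_eq_zero_or_one b with rfl | rfl <;>
    norm_num [zmodTwoSign, single_apply]

theorem Zstr_eq_diagonal {n : ℕ} (S : Finset (Fin n)) :
    Zstr S = diagonal fun f => zmodTwoSign (∑ j ∈ S, f j) := by
  have hfactor : ∀ j, (if j ∈ S then Z else 1) =
      diagonal fun a => if j ∈ S then zmodTwoSign a else 1 := by
    intro j
    split_ifs
    · exact Z_eq_diagonal
    · exact diagonal_one.symm
  simp only [Zstr, hfactor, tens_diagonal, zmodTwoSign_sum, Finset.prod_ite_mem,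
    Finset.univ_inter]

theorem ann_conjTranspose_mul_self {n : ℕ} (i : Fin n) :
    (ann n i)ᴴ * ann n i = diagonal fun f => (1 - zmodTwoSign (f i)) / 2 := by
  have hfactor : ∀ j : Fin n,
      (if (j : ℕ) < i then Z else if (j : ℕ) = i then σm else 1)ᴴ *
        (if (j : ℕ) < i then Z else if (j : ℕ) = i then σm else 1) =
      diagonal fun a => if j = i then (1 - zmodTwoSign a) / 2 else 1 := by
    intro j
    rcases lt_trichotomy j i with hj | rfl | hj
    · simp [Fin.lt_def.mp hj, hj.ne, Z_conjTranspose_mul_self]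
    · simp [σm_conjTranspose_mul_self]
    · simp [hj.ne', not_lt.mpr hj.le, Fin.val_inj]
  rw [ann, tens_conjTranspose, tens_mul]
  simp only [hfactor, tens_diagonal, Finset.prod_ite_eq', Finset.mem_univ, if_true]

theorem mulVec_apply_eq_sum_rowSet {n : ℕ} (F : Matrix (Fin n) (Fin n) (ZMod 2))
    (g : Fin n → ZMod 2) (i : Fin n) : (F *ᵥ g) i = ∑ k ∈ rowSet F i, g k := by
  rw [rowSet, Finset.sum_filter, mulVec, dotProduct]
  refine Finset.sum_congr rfl fun k _ => ?_
  generalize F i k = x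
  rcases zmodTwo_eq_zero_or_one x with rfl | rfl <;> simp

theorem linear_encoding_number_operator_general (n : ℕ)
    (U : Matrix (Fin n) (Fin n) (ZMod 2)) (hU : IsUnit U) :
    ∀ i : Fin n,
      encMat U * ((ann n i)ᴴ * ann n i) * (encMat U)ᴴ =
        (1 / 2 : ℂ) • (1 - Zstr (rowSet U⁻¹ i)) := by
  intro i
  rw [ann_conjTranspose_mul_self, encMat_eq_permMatrix U hU,
    permMatrix_mul_mul_conjTranspose_permMatrix, submatrix_diagonal_equiv, Zstr_eq_diagonal,
    ← diagonal_one, diagonal_sub, ← diagonal_smul]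
  congr 1
  funext g
  simp only [Function.comp_apply, Equiv.Perm.coe_inv, mulVecPerm_symm_apply,
    mulVec_apply_eq_sum_rowSet, Pi.smul_apply, smul_eq_mul]
  ring

/-- conjugating the Jordan–Wigner number operator `a_i† a_i` by the permutation
matrix `m_U` of a linear encoding `U ∈ GL_n(𝔽₂)` gives `½(I − Z_{F(i)})` with `F = U⁻¹`. -/
theorem linear_encoding_number_operator (n : ℕ) (hn : 1 ≤ n)
    (U : Matrix (Fin n) (Fin n) (ZMod 2)) (hU : IsUnit U) :
    ∀ i : Fin n,
      encMat U * ((ann n i)ᴴ * ann n i) * (encMat U)ᴴ =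
        (1 / 2 : ℂ) • (1 - Zstr (rowSet U⁻¹ i)) :=
  linear_encoding_number_operator_general n U hU

end FQ
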